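/- arXiv:1211.2066 — 4 statements merged into one kernel-verified Lean document; each statement's English description precedes it below -/
import Mathlib

section
/- Let G be a connected undirected graph with edge weights, partitioned into vertex-disjoint clusters Q_1,...,Q_k. Let G_i be the subgraph induced by Q_i and let T_i be a minimum spanning tree of each connected component collection of G_i (assume each G_i is connected with MST T_i). Let U be the subgraph of G consisting of the union of the edge sets of T_1,...,T_k together with all edges of G whose endpoints lie in different clusters. Then U contains a minimum spanning tree of G. -/
open SimpleGraph

/-- `T` is a spanning tree of `G`: a subgraph (on the same vertex set) that is
connected and acyclic. -/
def IsSpanningTree {V : Type*} (G T : SimpleGraph V) : Prop :=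
  T ≤ G ∧ T.Connected ∧ T.IsAcyclic

/-- Total weight of the edges of a graph. -/
noncomputable def treeWeight {V : Type*} [Fintype V] (T : SimpleGraph V)
    (w : Sym2 V → ℝ) : ℝ :=
  ∑ e ∈ T.edgeSet.toFinite.toFinset, w e

/-- `T` is a minimum spanning tree of `G` with respect to `w`. -/
def IsMST {V : Type*} [Fintype V] (G T : SimpleGraph V) (w : Sym2 V → ℝ) : Prop :=
  IsSpanningTree G T ∧
    ∀ T' : SimpleGraph V, IsSpanningTree G T' → treeWeight T w ≤ treeWeight T' w


/-! Among the minimum spanning trees of `G`, take one with the fewest edges outside `U`. An edge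
`uv` of it outside `U` joins two vertices of one cluster `Qᵢ` and is not in `Tᵢ`. By the cycle
property of `Tᵢ`, every edge on the `Tᵢ`-path from `u` to `v` weighs at most `w(uv)`, and one of
them reconnects the two halves of the tree with `uv` removed; exchanging `uv` for it gives a
minimum spanning tree with fewer edges outside `U`. -/

namespace SimpleGraph

variable {V : Type*} {G H T M : SimpleGraph V} {u v x y : V}

lemma Connected.reachable_deleteEdges_or (hT : T.Connected) (u v a : V) :
    (T.deleteEdges {s(u, v)}).Reachable a u ∨ (T.deleteEdges {s(u, v)}).Reachable a v := by
  by_contra! h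
  obtain ⟨p⟩ := hT.preconnected a u
  obtain ⟨d, -, hd, hd'⟩ :=
    p.exists_boundary_dart {z | (T.deleteEdges {s(u, v)}).Reachable a z} (Reachable.refl a) h.1
  by_cases hdu : d.edge = s(u, v)
  · rcases Sym2.eq_iff.mp hdu with ⟨h₁, -⟩ | ⟨h₁, -⟩
    · exact h.1 (h₁ ▸ hd)
    · exact h.2 (h₁ ▸ hd)
  · exact hd' (hd.trans (deleteEdges_adj.mpr ⟨d.adj, hdu⟩).reachable)

lemma Connected.deleteEdges_sup_edge (hT : T.Connected)
    (hxy : ¬(T.deleteEdges {s(u, v)}).Reachable x y) :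
    (T.deleteEdges {s(u, v)} ⊔ edge x y).Connected := by
  set D := T.deleteEdges {s(u, v)}
  have hD : D ≤ D ⊔ edge x y := le_sup_left
  have hadj : (D ⊔ edge x y).Adj x y := Or.inr ((edge_adj _ _ _ _).mpr
    ⟨Or.inl ⟨rfl, rfl⟩, fun h => hxy (h ▸ Reachable.refl x)⟩)
  -- `x` and `y` lie on different sides of the cut, so the new edge reconnects `u` and `v`.
  have huv : (D ⊔ edge x y).Reachable u v := by
    rcases hT.reachable_deleteEdges_or u v x with hx | hx <;>
      rcases hT.reachable_deleteEdges_or u v y with hy | hy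
    · exact absurd (hx.trans hy.symm) hxy
    · exact ((hx.mono hD).symm.trans hadj.reachable).trans (hy.mono hD)
    · exact ((hy.mono hD).symm.trans hadj.reachable.symm).trans (hx.mono hD)
    · exact absurd (hx.trans hy.symm) hxy
  refine (connected_iff_exists_forall_reachable _).mpr ⟨u, fun z => ?_⟩
  rcases hT.reachable_deleteEdges_or u v z with hz | hz
  · exact (hz.mono hD).symm
  · exact huv.trans (hz.mono hD).symm

lemma IsAcyclic.not_reachable_deleteEdges_of_mem_edges (hM : M.IsAcyclic)
    {p : M.Walk u v} (hp : p.IsPath) (he : s(x, y) ∈ p.edges) :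
    ¬(M.deleteEdges {s(x, y)}).Reachable u v := by
  classical
  rw [reachable_deleteEdges_iff_exists_walk]
  rintro ⟨q, hq⟩
  have hpq : p = q.bypass :=
    congrArg Subtype.val ((hM.subsingleton_path u v).elim ⟨p, hp⟩ q.toPath)
  exact hq (q.edges_bypass_subset_edges (hpq ▸ he))

lemma edgeSet_deleteEdges_sup_edge (hxy : x ≠ y) (e : Sym2 V) :
    (T.deleteEdges {e} ⊔ edge x y).edgeSet = insert s(x, y) (T.edgeSet \ {e}) := by
  rw [edgeSet_sup, edgeSet_deleteEdges, edgeSet_edge_of_ne hxy, Set.union_singleton]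

end SimpleGraph

open SimpleGraph

section

variable {V : Type*} {G H T M : SimpleGraph V} {u v x y : V}

lemma IsSpanningTree.exchange (hT : IsSpanningTree G T) (hxy : G.Adj x y)
    (hr : ¬(T.deleteEdges {s(u, v)}).Reachable x y) :
    IsSpanningTree G (T.deleteEdges {s(u, v)} ⊔ edge x y) :=
  ⟨sup_le ((deleteEdges_le _).trans hT.1) ((edge_le_iff G).mpr (Or.inr hxy)),
    hT.2.1.deleteEdges_sup_edge hr, (hT.2.2.anti (deleteEdges_le _)).sup_edge_of_not_reachable hr⟩

lemma treeWeight_deleteEdges_sup_edge [Fintype V] (w : Sym2 V → ℝ) {e : Sym2 V}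
    (he : e ∈ T.edgeSet) (hxy : x ≠ y) (hxyT : s(x, y) ∉ T.edgeSet) :
    treeWeight (T.deleteEdges {e} ⊔ edge x y) w = treeWeight T w - w e + w s(x, y) := by
  classical
  have hset : (T.deleteEdges {e} ⊔ edge x y).edgeSet.toFinite.toFinset =
      insert s(x, y) (T.edgeSet.toFinite.toFinset.erase e) := by
    ext f
    simp only [edgeSet_deleteEdges_sup_edge hxy, Set.Finite.mem_toFinset, Set.mem_insert_iff,
      Set.mem_sdiff, Set.mem_singleton_iff, Finset.mem_insert, Finset.mem_erase]
    tauto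
  have hxy' : s(x, y) ∉ T.edgeSet.toFinite.toFinset.erase e := by simp [hxyT]
  rw [treeWeight, treeWeight, hset, Finset.sum_insert hxy',
    Finset.sum_erase_eq_sub (by simpa using he)]
  ring

lemma exists_isMST [Fintype V] (hG : G.Connected) (w : Sym2 V → ℝ) : ∃ M, IsMST G M w := by
  obtain ⟨T, hTG, hT⟩ := hG.exists_isTree_le
  obtain ⟨M, hM, hmin⟩ := Set.exists_min_image {T | IsSpanningTree G T} (treeWeight · w)
    (Set.toFinite _) ⟨T, hTG, hT.connected, hT.isAcyclic⟩
  exact ⟨M, hM, hmin⟩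

lemma IsMST.weight_le_of_mem_edges [Fintype V] {w : Sym2 V → ℝ}
    (hM : IsMST H M w) (huv : H.Adj u v) {p : M.Walk u v} (hp : p.IsPath) {e : Sym2 V}
    (he : e ∈ p.edges) : w e ≤ w s(u, v) := by
  by_cases heuv : e = s(u, v)
  · rw [heuv]
  induction e using Sym2.ind with | h x y => ?_
  have hr := hM.1.2.2.not_reachable_deleteEdges_of_mem_edges hp he
  have huvM : s(u, v) ∉ M.edgeSet := fun h =>
    hr (deleteEdges_adj.mpr ⟨h, by simpa [eq_comm] using heuv⟩).reachable
  have hswap := hM.2 _ (hM.1.exchange huv hr)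
  rw [treeWeight_deleteEdges_sup_edge w (p.edges_subset_edgeSet he) huv.ne huvM] at hswap
  linarith

lemma IsMST.exists_isMST_ncard_sdiff_lt [Fintype V] {w : Sym2 V → ℝ} (hM : IsMST G M w)
    (hHG : H ≤ G) (huv : M.Adj u v) (huvH : ¬H.Adj u v) (p : H.Walk u v)
    (hp : ∀ e ∈ p.edges, w e ≤ w s(u, v)) :
    ∃ M', IsMST G M' w ∧ (M'.edgeSet \ H.edgeSet).ncard < (M.edgeSet \ H.edgeSet).ncard := by
  set D := M.deleteEdges {s(u, v)}
  have hbridge : ¬D.Reachable u v := isAcyclic_iff_forall_adj_isBridge.mp hM.1.2.2 huv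
  -- `p` leaves the component of `u` in `M - uv` through an edge `ab`, which may replace `uv`.
  obtain ⟨d, hdp, hd, hd'⟩ :=
    p.exists_boundary_dart {z | D.Reachable u z} (Reachable.refl u) hbridge
  obtain ⟨⟨a, b⟩, hab⟩ := d
  dsimp only at hab hd hd'
  have hr : ¬D.Reachable a b := fun h => hd' (hd.trans h)
  have habuv : s(a, b) ≠ s(u, v) := fun h => huvH (by rw [← mem_edgeSet, ← h]; exact hab)
  have habM : s(a, b) ∉ M.edgeSet := fun h => hr (deleteEdges_adj.mpr ⟨h, habuv⟩).reachable
  have hwt : treeWeight (D ⊔ edge a b) w ≤ treeWeight M w := by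
    have : w s(a, b) ≤ w s(u, v) := hp _ (p.edges_eq_map_darts ▸ List.mem_map_of_mem hdp)
    rw [treeWeight_deleteEdges_sup_edge w huv hab.ne habM]
    linarith
  refine ⟨D ⊔ edge a b, ⟨hM.1.exchange (hHG hab) hr, fun T hT => hwt.trans (hM.2 T hT)⟩,
    Set.ncard_lt_ncard ?_⟩
  rw [edgeSet_deleteEdges_sup_edge hab.ne]
  refine (Set.ssubset_iff_of_subset ?_).mpr ⟨s(u, v), ⟨huv, huvH⟩, fun h => ?_⟩
  · rintro f ⟨rfl | ⟨hfM, -⟩, hfH⟩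
    exacts [absurd hab hfH, ⟨hfM, hfH⟩]
  · rcases h.1 with h | ⟨-, h⟩
    exacts [habuv h.symm, h rfl]

theorem exists_isMST_le_of_forall_exists_walk [Fintype V] {w : Sym2 V → ℝ} (hG : G.Connected)
    (hHG : H ≤ G) (h : ∀ ⦃u v⦄, G.Adj u v → ¬H.Adj u v →
      ∃ p : H.Walk u v, ∀ e ∈ p.edges, w e ≤ w s(u, v)) :
    ∃ M, IsMST G M w ∧ M ≤ H := by
  obtain ⟨M, hM, hmin⟩ := Set.exists_min_image {M | IsMST G M w}
    (fun M => (M.edgeSet \ H.edgeSet).ncard) (Set.toFinite _) (exists_isMST hG w)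
  refine ⟨M, hM, fun u v huv => ?_⟩
  by_contra huvH
  obtain ⟨p, hp⟩ := h (hM.1.1 huv) huvH
  obtain ⟨M', hM', hlt⟩ := hM.exists_isMST_ncard_sdiff_lt hHG huv huvH p hp
  exact (hmin M' hM').not_gt hlt

end

theorem mst_of_cluster_msts_union_general {V ι : Type*} [Fintype V] [DecidableEq ι] (G : SimpleGraph V)
    (w : Sym2 V → ℝ) (hG : G.Connected) (cl : V → ι)
    (T : ∀ i : ι, SimpleGraph {v : V | cl v = i})
    (hT : ∀ i : ι, IsMST (G.induce {v : V | cl v = i}) (T i)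
      (fun e => w (e.map Subtype.val))) :
    ∃ Tmst : SimpleGraph V, IsMST G Tmst w ∧
      Tmst ≤ SimpleGraph.fromRel (fun u v =>
        (G.Adj u v ∧ cl u ≠ cl v) ∨
        ∃ h : cl u = cl v, (T (cl v)).Adj ⟨u, h⟩ ⟨v, rfl⟩) := by
  set U := SimpleGraph.fromRel (fun u v =>
    (G.Adj u v ∧ cl u ≠ cl v) ∨ ∃ h : cl u = cl v, (T (cl v)).Adj ⟨u, h⟩ ⟨v, rfl⟩)
  let toU (i : ι) : T i →g U := ⟨Subtype.val, fun {a b} hab => by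
    obtain ⟨b, rfl⟩ := b
    exact ⟨fun h => hab.ne (Subtype.ext h), Or.inl (Or.inr ⟨a.2, hab⟩)⟩⟩
  have hUG : U ≤ G := by
    rintro u v ⟨-, (⟨huv, -⟩ | ⟨_, huv⟩) | (⟨huv, -⟩ | ⟨_, huv⟩)⟩
    exacts [huv, (hT _).1.1 huv, huv.symm, ((hT _).1.1 huv).symm]
  refine exists_isMST_le_of_forall_exists_walk hG hUG fun u v huv huvU => ?_
  have hcl : cl u = cl v := by
    by_contra h
    exact huvU ⟨huv.ne, Or.inl (Or.inl ⟨huv, h⟩)⟩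
  obtain ⟨p, hp⟩ := (hT (cl v)).1.2.1.exists_isPath ⟨u, hcl⟩ ⟨v, rfl⟩
  refine ⟨p.map (toU (cl v)), fun e he => ?_⟩
  rw [Walk.edges_map, List.mem_map] at he
  obtain ⟨e, he, rfl⟩ := he
  exact (hT (cl v)).weight_le_of_mem_edges (by simpa using huv) hp he

/-- If the vertices of a connected weighted graph `G` are partitioned into clusters
(by `cl`), each cluster inducing a connected subgraph with a minimum spanning tree
`T i`, then the union `U` of those spanning trees together with all edges of `G`
between different clusters contains a minimum spanning tree of `G`. -/
theorem mst_of_cluster_msts_union {V ι : Type*} [Fintype V] [DecidableEq ι] (G : SimpleGraph V)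
    (w : Sym2 V → ℝ) (hG : G.Connected) (cl : V → ι)
    (T : ∀ i : ι, SimpleGraph {v : V | cl v = i})
    (hconn : ∀ i : ι, (G.induce {v : V | cl v = i}).Connected)
    (hT : ∀ i : ι, IsMST (G.induce {v : V | cl v = i}) (T i)
      (fun e => w (e.map Subtype.val))) :
    ∃ Tmst : SimpleGraph V, IsMST G Tmst w ∧
      Tmst ≤ SimpleGraph.fromRel (fun u v =>
        (G.Adj u v ∧ cl u ≠ cl v) ∨
        ∃ h : cl u = cl v, (T (cl v)).Adj ⟨u, h⟩ ⟨v, rfl⟩) :=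
  mst_of_cluster_msts_union_general G w hG cl T hT
end

section
/- Let G be a directed graph with non-negative edge weights and let Q be a set of vertices such that every edge between Q and its complement is incident (on the Q side) to a vertex of ∂Q. Define G* to be the graph obtained from G by deleting the interior vertices Q \ ∂Q and adding, for each ordered pair (u,v) of distinct vertices of ∂Q, an edge of weight δ_{G(Q)}(u,v) (the distance from u to v in the subgraph induced by Q). Then for every vertex s and every vertex t not in Q \ ∂Q, δ_{G*}(s,t) = δ_G(s,t). -/
open scoped ENNReal NNReal

/-- Total weight of the walk starting at `x` and continuing through the vertices
of `l`. -/
noncomputable def walkCost {V : Type*} (w : V → V → ℝ≥0∞) : V → List V → ℝ≥0∞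
  | _, [] => 0
  | x, y :: l => w x y + walkCost w y l

/-- Shortest-path distance from `x` to `y` in the directed graph with edge
relation `E` and edge weights `w` (`∞` if `y` is not reachable from `x`). -/
noncomputable def pathDist {V : Type*} (E : V → V → Prop) (w : V → V → ℝ≥0∞)
    (x y : V) : ℝ≥0∞ :=
  ⨅ (l : List V) (_ : List.Chain E x l ∧
      (x :: l).getLast (List.cons_ne_nil x l) = y),
    walkCost w x l

/-- The boundary of a vertex set `Q`: the vertices of `Q` having an edge to or
from a vertex outside `Q`. -/
def bdry {V : Type*} (E : V → V → Prop) (Q : Set V) : Set V :=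
  {v ∈ Q | ∃ u, u ∉ Q ∧ (E u v ∨ E v u)}

/-- Edge relation of the graph `G*`: the interior vertices `Q \ ∂Q` are deleted,
and for each ordered pair of distinct boundary vertices a new edge is added. -/
def starRel {V : Type*} (E : V → V → Prop) (Q : Set V) (u v : V) : Prop :=
  (E u v ∧ u ∉ Q \ bdry E Q ∧ v ∉ Q \ bdry E Q) ∨
    (u ∈ bdry E Q ∧ v ∈ bdry E Q ∧ u ≠ v)

-- Edge weights of `G*`: the new edge from a boundary vertex `u` to a boundary
-- vertex `v` has weight `δ_{G(Q)}(u,v)`; parallel edges keep the minimum weight.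
open Classical in
noncomputable def starWeight {V : Type*} (E : V → V → Prop) (Q : Set V)
    (w : V → V → ℝ≥0) (u v : V) : ℝ≥0∞ :=
  if u ∈ bdry E Q ∧ v ∈ bdry E Q ∧ u ≠ v then
    (if E u v then
      min (w u v : ℝ≥0∞)
        (pathDist (fun a b => E a b ∧ a ∈ Q ∧ b ∈ Q) (fun a b => (w a b : ℝ≥0∞)) u v)
    else pathDist (fun a b => E a b ∧ a ∈ Q ∧ b ∈ Q) (fun a b => (w a b : ℝ≥0∞)) u v)
  else (w u v : ℝ≥0∞)

/-! Both inequalities come from potentials: a function `φ` with `φ x ≤ w x y + φ y` along every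
edge satisfies `φ x ≤ δ(x, y) + φ y` for all `x, y`. For `δ_G ≤ δ_{G*}` take `φ = δ_G(·, t)`:
every edge of `G*` is at least as long as some path of `G`. For `δ_{G*} ≤ δ_G` take
`φ x = δ_{G*}(x, t)` off `Q` and, for `x ∈ Q`, the cheapest way to reach `t` by walking inside
`G(Q)` to a boundary vertex and continuing in `G*`; the two agree on `∂Q` because `G*` contains
the shortcut edges between boundary vertices. -/

section PathDist

variable {V : Type*} {E : V → V → Prop} {w : V → V → ℝ≥0∞}

lemma pathDist_le_walkCost (x : V) {l : List V} (hl : List.IsChain E (x :: l)) :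
    pathDist E w x ((x :: l).getLast (List.cons_ne_nil x l)) ≤ walkCost w x l :=
  iInf₂_le l ⟨hl, rfl⟩

lemma pathDist_self (x : V) : pathDist E w x x = 0 :=
  nonpos_iff_eq_zero.mp (pathDist_le_walkCost (w := w) x (List.isChain_singleton x))

lemma pathDist_le_of_rel {x y : V} (h : E x y) : pathDist E w x y ≤ w x y := by
  simpa [walkCost] using
    pathDist_le_walkCost (w := w) x (List.isChain_pair.mpr h)

lemma pathDist_le_add_of_rel {x y : V} (h : E x y) (z : V) :
    pathDist E w x z ≤ w x y + pathDist E w y z := by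
  simp only [pathDist, ENNReal.add_iInf]
  refine le_iInf₂ fun l hl => ?_
  have hchain : List.IsChain E (x :: y :: l) := List.isChain_cons_cons.mpr ⟨h, hl.1⟩
  have := pathDist_le_walkCost (w := w) x hchain
  rwa [List.getLast_cons (List.cons_ne_nil y l), hl.2] at this

lemma le_walkCost_add_of_potential {φ : V → ℝ≥0∞} (hφ : ∀ x y, E x y → φ x ≤ w x y + φ y) :
    ∀ (x : V) (l : List V), List.IsChain E (x :: l) →
      φ x ≤ walkCost w x l + φ ((x :: l).getLast (List.cons_ne_nil x l))
  | x, [], _ => by simp [walkCost]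
  | x, y :: l, hl => by
    obtain ⟨hxy, hl⟩ := List.isChain_cons_cons.mp hl
    calc φ x ≤ w x y + φ y := hφ x y hxy
      _ ≤ w x y + (walkCost w y l + φ ((y :: l).getLast (List.cons_ne_nil y l))) := by
        gcongr
        exact le_walkCost_add_of_potential hφ y l hl
      _ = walkCost w x (y :: l) + φ ((x :: y :: l).getLast (List.cons_ne_nil x _)) := by
        rw [List.getLast_cons (List.cons_ne_nil y l), walkCost, add_assoc]

lemma le_pathDist_add_of_potential {φ : V → ℝ≥0∞} (hφ : ∀ x y, E x y → φ x ≤ w x y + φ y)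
    (x y : V) : φ x ≤ pathDist E w x y + φ y := by
  simp only [pathDist, ENNReal.iInf_add]
  refine le_iInf₂ fun l hl => ?_
  simpa [hl.2] using le_walkCost_add_of_potential hφ x l hl.1

lemma pathDist_triangle (x y z : V) :
    pathDist E w x z ≤ pathDist E w x y + pathDist E w y z :=
  le_pathDist_add_of_potential (fun _ _ h => pathDist_le_add_of_rel h z) x y

lemma pathDist_le_pathDist_of_forall_rel {E' : V → V → Prop} {w' : V → V → ℝ≥0∞}
    (h : ∀ x y, E' x y → pathDist E w x y ≤ w' x y) (x y : V) :
    pathDist E w x y ≤ pathDist E' w' x y := by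
  have hφ : ∀ a b, E' a b → pathDist E w a y ≤ w' a b + pathDist E w b y := fun a b hab =>
    (pathDist_triangle a b y).trans (add_le_add_left (h a b hab) _)
  simpa [pathDist_self] using le_pathDist_add_of_potential hφ x y

lemma pathDist_anti {E' : V → V → Prop} (h : ∀ x y, E' x y → E x y) (x y : V) :
    pathDist E w x y ≤ pathDist E' w x y :=
  pathDist_le_pathDist_of_forall_rel (fun a b hab => pathDist_le_of_rel (h a b hab)) x y

end PathDist

section StarGraph

variable {V : Type*} {E : V → V → Prop} {Q : Set V} {w : V → V → ℝ≥0}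

/-- The edge relation of the induced subgraph `G(Q)`. -/
abbrev inducedRel (E : V → V → Prop) (Q : Set V) (a b : V) : Prop :=
  E a b ∧ a ∈ Q ∧ b ∈ Q

lemma mem_of_rel_of_mem_interior {x y : V} (h : E x y)
    (hint : x ∈ Q \ bdry E Q ∨ y ∈ Q \ bdry E Q) : x ∈ Q ∧ y ∈ Q := by
  by_contra hxy
  rcases hint with ⟨hx, hxb⟩ | ⟨hy, hyb⟩
  · exact hxb ⟨hx, y, fun hy => hxy ⟨hx, hy⟩, Or.inr h⟩
  · exact hyb ⟨hy, x, fun hx => hxy ⟨hx, hy⟩, Or.inl h⟩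

lemma starWeight_le_of_rel {u v : V} (h : E u v) : starWeight E Q w u v ≤ w u v := by
  unfold starWeight
  split_ifs
  · exact min_le_left _ _
  · exact le_rfl

lemma starWeight_le_pathDist_inducedRel {u v : V} (hu : u ∈ bdry E Q) (hv : v ∈ bdry E Q)
    (huv : u ≠ v) :
    starWeight E Q w u v ≤ pathDist (inducedRel E Q) (fun a b => (w a b : ℝ≥0∞)) u v := by
  unfold starWeight
  rw [if_pos ⟨hu, hv, huv⟩]
  split_ifs
  · exact min_le_right _ _
  · exact le_rfl

lemma pathDist_le_starWeight {u v : V} (h : starRel E Q u v) :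
    pathDist E (fun a b => (w a b : ℝ≥0∞)) u v ≤ starWeight E Q w u v := by
  have hinduced := pathDist_anti (w := fun a b => (w a b : ℝ≥0∞))
    (fun a b (hab : inducedRel E Q a b) => hab.1) u v
  unfold starWeight
  split_ifs with hbdry hE
  · exact le_min (pathDist_le_of_rel hE) hinduced
  · exact hinduced
  · exact pathDist_le_of_rel (h.resolve_right hbdry).1

lemma pathDist_starRel_le_add {x b : V} (hx : x ∈ bdry E Q) (hb : b ∈ bdry E Q) (t : V) :
    pathDist (starRel E Q) (starWeight E Q w) x t ≤
      pathDist (inducedRel E Q) (fun a b => (w a b : ℝ≥0∞)) x b +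
        pathDist (starRel E Q) (starWeight E Q w) b t := by
  rcases eq_or_ne x b with rfl | hxb
  · exact le_add_self
  · calc _ ≤ starWeight E Q w x b + pathDist (starRel E Q) (starWeight E Q w) b t :=
          pathDist_le_add_of_rel (E := starRel E Q) (Or.inr ⟨hx, hb, hxb⟩) t
      _ ≤ _ := by gcongr; exact starWeight_le_pathDist_inducedRel hx hb hxb

variable (E Q w) in
noncomputable def starPotential (t x : V) : ℝ≥0∞ :=
  open Classical in
  if x ∈ Q then
    ⨅ b ∈ bdry E Q, pathDist (inducedRel E Q) (fun a b => (w a b : ℝ≥0∞)) x b +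
      pathDist (starRel E Q) (starWeight E Q w) b t
  else pathDist (starRel E Q) (starWeight E Q w) x t

lemma starPotential_eq_of_notMem_interior {x : V} (hx : x ∉ Q \ bdry E Q) (t : V) :
    starPotential E Q w t x = pathDist (starRel E Q) (starWeight E Q w) x t := by
  unfold starPotential
  split_ifs with hxQ
  · have hxb : x ∈ bdry E Q := not_not.mp fun h => hx ⟨hxQ, h⟩
    refine le_antisymm ?_ (le_iInf₂ fun b hb => pathDist_starRel_le_add hxb hb t)
    simpa [pathDist_self] using iInf₂_le (f := fun b (_ : b ∈ bdry E Q) =>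
      pathDist (inducedRel E Q) (fun a b => (w a b : ℝ≥0∞)) x b +
        pathDist (starRel E Q) (starWeight E Q w) b t) x hxb
  · rfl

lemma starPotential_le_add {x y : V} (h : E x y) (t : V) :
    starPotential E Q w t x ≤ w x y + starPotential E Q w t y := by
  by_cases hint : x ∈ Q \ bdry E Q ∨ y ∈ Q \ bdry E Q
  · obtain ⟨hx, hy⟩ := mem_of_rel_of_mem_interior h hint
    simp only [starPotential, if_pos hx, if_pos hy, ENNReal.add_iInf]
    refine le_iInf₂ fun b hb => (iInf₂_le b hb).trans ?_
    rw [← add_assoc]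
    gcongr
    exact pathDist_le_add_of_rel ⟨h, hx, hy⟩ b
  · rw [not_or] at hint
    rw [starPotential_eq_of_notMem_interior hint.1, starPotential_eq_of_notMem_interior hint.2]
    calc _ ≤ starWeight E Q w x y + pathDist (starRel E Q) (starWeight E Q w) y t :=
          pathDist_le_add_of_rel (E := starRel E Q) (Or.inl ⟨h, hint.1, hint.2⟩) t
      _ ≤ _ := by gcongr; exact starWeight_le_of_rel h

end StarGraph

theorem star_graph_preserves_distances_general {V : Type*}
    (E : V → V → Prop) (w : V → V → ℝ≥0) (Q : Set V)
    (s t : V) (hs : s ∉ Q \ bdry E Q) (ht : t ∉ Q \ bdry E Q) :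
    pathDist (starRel E Q) (starWeight E Q w) s t =
      pathDist E (fun a b => (w a b : ℝ≥0∞)) s t := by
  have hG := le_pathDist_add_of_potential (φ := starPotential E Q w t)
    (fun _ _ h => starPotential_le_add h t) s t
  rw [starPotential_eq_of_notMem_interior hs, starPotential_eq_of_notMem_interior ht,
    pathDist_self, add_zero] at hG
  exact le_antisymm hG (pathDist_le_pathDist_of_forall_rel (fun _ _ => pathDist_le_starWeight) s t)

/-- Replacing the interior of a cluster `Q` by shortest-path edges between its
boundary vertices preserves all distances between vertices outside the
interior. -/
theorem star_graph_preserves_distances {V : Type*} [Fintype V]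
    (E : V → V → Prop) (w : V → V → ℝ≥0) (Q : Set V)
    (hQ : ∀ x y, E x y →
      ((x ∉ Q ∧ y ∈ Q) → y ∈ bdry E Q) ∧ ((x ∈ Q ∧ y ∉ Q) → x ∈ bdry E Q))
    (s t : V) (hs : s ∉ Q \ bdry E Q) (ht : t ∉ Q \ bdry E Q) :
    pathDist (starRel E Q) (starWeight E Q w) s t =
      pathDist E (fun a b => (w a b : ℝ≥0∞)) s t :=
  star_graph_preserves_distances_general E w Q s t hs ht
end

section
/- Let h_0 ≥ 1 and define h_1 = h_0 + 3 and h_i = 2^{h_{i−1} − h_{i−2} − 2} · h_{i−1} for i ≥ 2. Then for every i ≥ 2, h_i · 2^{h_0 − h_{i−1} + i} ≤ (1/2) · h_{i−1} · 2^{h_0 − h_{i−2} + (i−1)}; consequently the sum over i ≥ 1 of h_i · 2^{h_0 − h_{i−1} + i} is at most 2 · h_1 · 2^{h_0 − h_0 + 1} = 4·h_1. -/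
/-!
By induction `hᵢ₊₁ ≥ hᵢ + 3`, so the natural-number exponent `hᵢ₊₁ − hᵢ − 2` is never truncated.
In real arithmetic the factor `2^(hᵢ₊₁ − hᵢ − 2)` gained by `hᵢ₊₂` is then exactly cancelled by the
loss in `2^(h₀ − hᵢ₊₁)`, up to one more factor `1/2`: the charges form a geometric sequence of
ratio `1/2` starting at `2·h₁`, whose sum is `4·h₁`.
-/

section LevelCharges

variable {h : ℕ → ℕ}

theorem add_three_le_succ_of_doubling_rec (h1 : h 1 = h 0 + 3)
    (hrec : ∀ i : ℕ, h (i + 2) = 2 ^ (h (i + 1) - h i - 2) * h (i + 1)) (i : ℕ) :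
    h i + 3 ≤ h (i + 1) := by
  induction i with
  | zero => exact h1.ge
  | succ n ih =>
    have hfactor : 2 ≤ 2 ^ (h (n + 1) - h n - 2) := Nat.le_self_pow (by omega) 2
    rw [hrec n]
    nlinarith

/-- Indexed so that `levelCharge h i` is the charge of level `i + 1`. -/
noncomputable def levelCharge (h : ℕ → ℕ) (i : ℕ) : ℝ :=
  (h (i + 1) : ℝ) * (2 : ℝ) ^ ((h 0 : ℤ) - (h i : ℤ) + ((i : ℤ) + 1))

theorem levelCharge_succ (h1 : h 1 = h 0 + 3)
    (hrec : ∀ i : ℕ, h (i + 2) = 2 ^ (h (i + 1) - h i - 2) * h (i + 1)) (i : ℕ) :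
    levelCharge h (i + 1) = levelCharge h i / 2 := by
  have hgap := add_three_le_succ_of_doubling_rec h1 hrec i
  have hfactor : ((2 ^ (h (i + 1) - h i - 2) : ℕ) : ℝ) =
      (2 : ℝ) ^ ((h (i + 1) : ℤ) - h i - 2) := by
    rw [Nat.cast_pow, Nat.cast_ofNat, ← zpow_natCast]
    congr 1
    omega
  rw [levelCharge, levelCharge, hrec i, Nat.cast_mul, hfactor, mul_comm _ (h (i + 1) : ℝ),
    mul_assoc, ← zpow_add₀ two_ne_zero, mul_div_assoc, div_eq_mul_inv, ← zpow_sub_one₀ two_ne_zero]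
  congr 2
  push_cast
  ring

end LevelCharges

theorem tsum_eq_two_mul_of_succ_eq_half {f : ℕ → ℝ} (hf : ∀ i, f (i + 1) = f i / 2) :
    ∑' i, f i = 2 * f 0 := by
  have hgeom : ∀ i, f i = f 0 * (1 / 2) ^ i := by
    intro i
    induction i with
    | zero => simp
    | succ n ih => rw [hf, ih, pow_succ]; ring
  rw [tsum_congr hgeom, tsum_mul_left, tsum_geometric_two, mul_comm]

theorem level_charges_geometric_decay_general (h : ℕ → ℕ)
    (h1 : h 1 = h 0 + 3)
    (hrec : ∀ i : ℕ, h (i + 2) = 2 ^ (h (i + 1) - h i - 2) * h (i + 1)) :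
    (∀ i : ℕ,
      (h (i + 2) : ℝ) * (2 : ℝ) ^ ((h 0 : ℤ) - (h (i + 1) : ℤ) + ((i : ℤ) + 2)) ≤
        (1 / 2) *
          ((h (i + 1) : ℝ) * (2 : ℝ) ^ ((h 0 : ℤ) - (h i : ℤ) + ((i : ℤ) + 1)))) ∧
      (∑' i : ℕ,
          (h (i + 1) : ℝ) * (2 : ℝ) ^ ((h 0 : ℤ) - (h i : ℤ) + ((i : ℤ) + 1))) ≤
        4 * (h 1 : ℝ) := by
  refine ⟨fun i => le_of_eq ?_, le_of_eq ?_⟩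
  · have hhalf := levelCharge_succ h1 hrec i
    rw [levelCharge, levelCharge, div_eq_inv_mul] at hhalf
    push_cast at hhalf
    rw [one_div, ← hhalf]
    ring_nf
  · change ∑' i, levelCharge h i = _
    rw [tsum_eq_two_mul_of_succ_eq_half (levelCharge_succ h1 hrec), levelCharge]
    norm_num
    ring

/-- Geometric decay of the priority-queue charges.  With the level sequence
`h₀ ≥ 1`, `h₁ = h₀ + 3`, `hᵢ = 2^(hᵢ₋₁ − hᵢ₋₂ − 2) · hᵢ₋₁` for `i ≥ 2`, the
charge `hᵢ · 2^(h₀ − hᵢ₋₁ + i)` of level `i ≥ 2` is at most half the charge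
`hᵢ₋₁ · 2^(h₀ − hᵢ₋₂ + (i−1))` of level `i − 1`; consequently the total charge
`∑_{i ≥ 1} hᵢ · 2^(h₀ − hᵢ₋₁ + i)` is at most `4·h₁`. -/
theorem level_charges_geometric_decay (h : ℕ → ℕ) (h0 : 1 ≤ h 0)
    (h1 : h 1 = h 0 + 3)
    (hrec : ∀ i : ℕ, h (i + 2) = 2 ^ (h (i + 1) - h i - 2) * h (i + 1)) :
    (∀ i : ℕ,
      (h (i + 2) : ℝ) * (2 : ℝ) ^ ((h 0 : ℤ) - (h (i + 1) : ℤ) + ((i : ℤ) + 2)) ≤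
        (1 / 2) *
          ((h (i + 1) : ℝ) * (2 : ℝ) ^ ((h 0 : ℤ) - (h i : ℤ) + ((i : ℤ) + 1)))) ∧
      (∑' i : ℕ,
          (h (i + 1) : ℝ) * (2 : ℝ) ^ ((h 0 : ℤ) - (h i : ℤ) + ((i : ℤ) + 1))) ≤
        4 * (h 1 : ℝ) :=
  level_charges_geometric_decay_general h h1 hrec
end

section
/- In Dijkstra's algorithm on a directed graph with non-negative edge weights, at every step, every finite tentative distance of an unsettled vertex is at least the distance of the most recently settled vertex, and at most that distance plus the maximum edge weight W. Hence all keys present in the priority queue at any time differ by at most W. -/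
open scoped ENNReal NNReal

/-! A vertex `v` outside `S` is at distance at least `δ(u₀)`, since `S` contains every vertex
closer to `s` than `u₀`; every key `δ(u) + w(u,v)` dominates `δ(v)` by the triangle inequality.
A finite key is attained through some settled `u`, where `δ(u) ≤ δ(u₀)` and `w(u,v) ≤ W`. -/

section Walks

variable {V : Type*}

lemma walkCost_append_singleton (w : V → V → ℝ≥0∞) (v : V) :
    ∀ (x : V) (l : List V), walkCost w x (l ++ [v]) =
      walkCost w x l + w ((x :: l).getLast (List.cons_ne_nil x l)) v
  | x, [] => by simp [walkCost]
  | x, y :: l => by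
    rw [List.cons_append, walkCost, walkCost, walkCost_append_singleton w v y l,
      List.getLast_cons_cons, add_assoc]

lemma pathDist_le_add_of_adj (E : V → V → Prop) (w : V → V → ℝ≥0∞) (s : V) {u v : V}
    (he : E u v) : pathDist E w s v ≤ pathDist E w s u + w u v := by
  simp only [pathDist, ENNReal.iInf_add]
  refine le_iInf₂ fun l hl => ?_
  calc pathDist E w s v ≤ walkCost w s (l ++ [v]) :=
        iInf₂_le (l ++ [v]) ⟨List.IsChain.append (l₁ := s :: l) hl.1 (.singleton v)
          (by simpa [List.getLast?_eq_some_getLast, hl.2] using he), by simp⟩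
    _ = walkCost w s l + w u v := by rw [walkCost_append_singleton, hl.2]

end Walks

section TentativeDist

variable {V : Type*}

noncomputable def tentativeDist (E : V → V → Prop) (w : V → V → ℝ≥0∞) (δ : V → ℝ≥0∞)
    (S : Set V) (v : V) : ℝ≥0∞ :=
  ⨅ (u : V) (_ : u ∈ S ∧ E u v), δ u + w u v

variable {E : V → V → Prop} {w : V → V → ℝ≥0∞} {δ : V → ℝ≥0∞} {S : Set V}

lemma le_tentativeDist (hδ : ∀ u v, E u v → δ v ≤ δ u + w u v) {c : ℝ≥0∞}
    (hS : ∀ v, δ v < c → v ∈ S) {v : V} (hv : v ∉ S) : c ≤ tentativeDist E w δ S v :=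
  le_iInf₂ fun u hu => (not_lt.1 fun h => hv (hS v h)).trans (hδ u v hu.2)

lemma tentativeDist_le_add {c W : ℝ≥0∞} (hc : ∀ u ∈ S, δ u ≤ c)
    (hW : ∀ u v, E u v → w u v ≤ W) {v : V} (hv : tentativeDist E w δ S v ≠ ⊤) :
    tentativeDist E w δ S v ≤ c + W := by
  simp only [tentativeDist, ne_eq, iInf_eq_top, not_forall] at hv
  obtain ⟨u, hu, -⟩ := hv
  exact (iInf₂_le u hu).trans (add_le_add (hc u hu.1) (hW u v hu.2))

end TentativeDist

theorem dijkstra_tentative_distance_window_general {V : Type*}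
    (E : V → V → Prop) (w : V → V → ℝ≥0) (W : ℝ≥0)
    (hw : ∀ u v, E u v → w u v ≤ W)
    (s : V) (S : Set V)
    (hclosed : ∀ u ∈ S, ∀ v : V,
      pathDist E (fun a b => (w a b : ℝ≥0∞)) s v <
        pathDist E (fun a b => (w a b : ℝ≥0∞)) s u → v ∈ S)
    (u₀ : V) (hu₀ : u₀ ∈ S)
    (hmax : ∀ u ∈ S,
      pathDist E (fun a b => (w a b : ℝ≥0∞)) s u ≤
        pathDist E (fun a b => (w a b : ℝ≥0∞)) s u₀) :
    (∀ v ∉ S,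
      (⨅ (u : V) (_ : u ∈ S ∧ E u v),
          pathDist E (fun a b => (w a b : ℝ≥0∞)) s u + w u v) ≠ ⊤ →
        pathDist E (fun a b => (w a b : ℝ≥0∞)) s u₀ ≤
            (⨅ (u : V) (_ : u ∈ S ∧ E u v),
              pathDist E (fun a b => (w a b : ℝ≥0∞)) s u + w u v) ∧
          (⨅ (u : V) (_ : u ∈ S ∧ E u v),
              pathDist E (fun a b => (w a b : ℝ≥0∞)) s u + w u v) ≤
            pathDist E (fun a b => (w a b : ℝ≥0∞)) s u₀ + W) ∧
    ∀ v₁ ∉ S, ∀ v₂ ∉ S,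
      (⨅ (u : V) (_ : u ∈ S ∧ E u v₁),
          pathDist E (fun a b => (w a b : ℝ≥0∞)) s u + w u v₁) ≠ ⊤ →
      (⨅ (u : V) (_ : u ∈ S ∧ E u v₂),
          pathDist E (fun a b => (w a b : ℝ≥0∞)) s u + w u v₂) ≠ ⊤ →
      (⨅ (u : V) (_ : u ∈ S ∧ E u v₁),
          pathDist E (fun a b => (w a b : ℝ≥0∞)) s u + w u v₁) ≤
        (⨅ (u : V) (_ : u ∈ S ∧ E u v₂),
            pathDist E (fun a b => (w a b : ℝ≥0∞)) s u + w u v₂) + W := by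
  set δ := pathDist E (fun a b => (w a b : ℝ≥0∞)) s
  have lower : ∀ v ∉ S, δ u₀ ≤ tentativeDist E (fun a b => (w a b : ℝ≥0∞)) δ S v :=
    fun v hv => le_tentativeDist (fun u v h => pathDist_le_add_of_adj E _ s h)
      (hclosed u₀ hu₀) hv
  have upper : ∀ v, tentativeDist E (fun a b => (w a b : ℝ≥0∞)) δ S v ≠ ⊤ →
      tentativeDist E (fun a b => (w a b : ℝ≥0∞)) δ S v ≤ δ u₀ + W :=
    fun v hv => tentativeDist_le_add hmax (fun u v h => ENNReal.coe_le_coe.2 (hw u v h)) hv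
  exact ⟨fun v hv hfin => ⟨lower v hv, upper v hfin⟩, fun v₁ _ v₂ hv₂ hfin₁ _ =>
    (upper v₁ hfin₁).trans (add_le_add_left (lower v₂ hv₂) _)⟩

/-- Dijkstra invariant.  Let `S` be the set of settled vertices, settled in order
of (final) distance from the source `s`, with `u₀` the most recently settled
vertex (of maximal distance among `S`).  The tentative distance of an unsettled
vertex `v` is the minimum of `δ(s,u) + w(u,v)` over settled `u` with an edge to
`v`.  If all edge weights are at most `W`, then every finite tentative distance
of an unsettled vertex lies between `δ(s,u₀)` and `δ(s,u₀) + W`; hence all keys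
present in the priority queue differ by at most `W`. -/
theorem dijkstra_tentative_distance_window {V : Type*} [Fintype V]
    (E : V → V → Prop) (w : V → V → ℝ≥0) (W : ℝ≥0)
    (hw : ∀ u v, E u v → w u v ≤ W)
    (s : V) (S : Set V) (hsS : s ∈ S)
    (hclosed : ∀ u ∈ S, ∀ v : V,
      pathDist E (fun a b => (w a b : ℝ≥0∞)) s v <
        pathDist E (fun a b => (w a b : ℝ≥0∞)) s u → v ∈ S)
    (u₀ : V) (hu₀ : u₀ ∈ S)
    (hfin : pathDist E (fun a b => (w a b : ℝ≥0∞)) s u₀ < ⊤)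
    (hmax : ∀ u ∈ S,
      pathDist E (fun a b => (w a b : ℝ≥0∞)) s u ≤
        pathDist E (fun a b => (w a b : ℝ≥0∞)) s u₀) :
    (∀ v ∉ S,
      (⨅ (u : V) (_ : u ∈ S ∧ E u v),
          pathDist E (fun a b => (w a b : ℝ≥0∞)) s u + w u v) ≠ ⊤ →
        pathDist E (fun a b => (w a b : ℝ≥0∞)) s u₀ ≤
            (⨅ (u : V) (_ : u ∈ S ∧ E u v),
              pathDist E (fun a b => (w a b : ℝ≥0∞)) s u + w u v) ∧
          (⨅ (u : V) (_ : u ∈ S ∧ E u v),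
              pathDist E (fun a b => (w a b : ℝ≥0∞)) s u + w u v) ≤
            pathDist E (fun a b => (w a b : ℝ≥0∞)) s u₀ + W) ∧
    ∀ v₁ ∉ S, ∀ v₂ ∉ S,
      (⨅ (u : V) (_ : u ∈ S ∧ E u v₁),
          pathDist E (fun a b => (w a b : ℝ≥0∞)) s u + w u v₁) ≠ ⊤ →
      (⨅ (u : V) (_ : u ∈ S ∧ E u v₂),
          pathDist E (fun a b => (w a b : ℝ≥0∞)) s u + w u v₂) ≠ ⊤ →
      (⨅ (u : V) (_ : u ∈ S ∧ E u v₁),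
          pathDist E (fun a b => (w a b : ℝ≥0∞)) s u + w u v₁) ≤
        (⨅ (u : V) (_ : u ∈ S ∧ E u v₂),
            pathDist E (fun a b => (w a b : ℝ≥0∞)) s u + w u v₂) + W :=
  dijkstra_tentative_distance_window_general E w W hw s S hclosed u₀ hu₀ hmax
end
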